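/- Let C be a triangulated category with shift functor Σ and M a rigid full subcategory, i.e. Hom_C(M, ΣM') = 0 for all M, M' ∈ M. Then the functor X ↦ Hom_C(−, X)|_M induces an equivalence (M ∗ ΣM)/ΣM ≃ mod M. -/

import Mathlib

open CategoryTheory CategoryTheory.Limits CategoryTheory.Pretriangulated Opposite ZeroObject

universe v u v' u' v'' u''

/-- `f` factors through an object belonging to `B`. -/
def FactorsThru {A : Type u''} [Category.{v''} A] (B : Set A) {X Y : A} (f : X ⟶ Y) : Prop :=
  ∃ (Z : A) (_ : Z ∈ B) (g : X ⟶ Z) (h : Z ⟶ Y), g ≫ h = f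

variable {C : Type u} [Category.{v} C] [Preadditive C] [HasZeroObject C]

/-- The full subcategory on a set of objects. -/
abbrev Subcat (𝓜 : Set C) := ObjectProperty.FullSubcategory (fun X : C => X ∈ 𝓜)

/-- The functor `X ↦ Hom_C(−, X)|_𝓜`, the restricted preadditive Yoneda embedding. -/
def resYoneda (𝓜 : Set C) : C ⥤ ((Subcat 𝓜)ᵒᵖ ⥤ AddCommGrpCat.{v}) :=
  preadditiveYoneda ⋙
    (Functor.whiskeringLeft _ _ _).obj (ObjectProperty.ι (fun X : C => X ∈ 𝓜)).op

/-- A contravariant additive functor `F` (an `M`-module) is finitely presented if it is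
the cokernel of a morphism between representable functors, i.e. there are `A B : M`,
`h : A ⟶ B` and `π : Hom(−,B) ⟶ F` such that
`Hom(−,A) ⟶ Hom(−,B) ⟶ F ⟶ 0` is exact. -/
def FinPres {M : Type u'} [Category.{v'} M] [Preadditive M]
    (F : Mᵒᵖ ⥤ AddCommGrpCat.{v'}) : Prop :=
  ∃ (A B : M) (h : A ⟶ B) (π : preadditiveYoneda.obj B ⟶ F),
    (∀ m : M, Function.Surjective (π.app (op m))) ∧
    (∀ (m : M) (x : (preadditiveYoneda.obj B).obj (op m)),
      π.app (op m) x = 0 ↔ ∃ y, (preadditiveYoneda.map h).app (op m) y = x)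

/-- `mod M`: the category of finitely presented contravariant additive functors
`M → Ab`. -/
abbrev ModCat (M : Type u') [Category.{v'} M] [Preadditive M] :=
  ObjectProperty.FullSubcategory (fun F : Mᵒᵖ ⥤ AddCommGrpCat.{v'} => F.Additive ∧ FinPres F)

variable [HasShift C ℤ] [∀ n : ℤ, (shiftFunctor C n).Additive] [Pretriangulated C]

variable (𝓜 : Set C)

/-- The subcategory `𝓜 ∗ Σ𝓜` of objects `X` fitting in a distinguished triangle
`M0 ⟶ M1 ⟶ X ⟶ M0⟦1⟧` with `M0, M1 ∈ 𝓜`. -/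
def star : Set C :=
  {X | ∃ M0 M1 : C, M0 ∈ 𝓜 ∧ M1 ∈ 𝓜 ∧
    ∃ (f : M0 ⟶ M1) (g : M1 ⟶ X) (h : X ⟶ M0⟦(1 : ℤ)⟧),
      Triangle.mk f g h ∈ distTriang C}

/-- The hom relation on `𝓜 ∗ Σ𝓜` identifying morphisms whose difference factors
through an object of `Σ𝓜`; its quotient is `(𝓜 ∗ Σ𝓜)/Σ𝓜`. -/
def starRel : HomRel (Subcat (star 𝓜)) :=
  fun {X Y} (f g : X ⟶ Y) =>
    FactorsThru ((shiftFunctor C (1 : ℤ)).obj '' 𝓜) (X := X.obj) (Y := Y.obj) (f - g).hom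

/-!
For `X` in `𝓜 ∗ Σ𝓜` with triangle `M₀ → M₁ → X → ΣM₀`, rigidity makes every map from `𝓜` to
`X` factor through `M₁ → X`, so `Hom(-, M₀) → Hom(-, M₁) → Hom(-, X)|_𝓜 → 0` is a presentation;
conversely a presentation `A → B` of a module is realised by completing `A → B` to a triangle, and
two modules presented by the same map are isomorphic. A map `X → Y` vanishes on `𝓜` iff it kills
`M₁ → X`, i.e. iff it factors through `X → ΣM₀`. A transformation `Hom(-, X)|_𝓜 → Hom(-, Y)|_𝓜` is
determined by the image of `M₁ → X`, which kills `M₀ → M₁` and hence extends over `X`. So restricted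
Yoneda is full and essentially surjective on `𝓜 ∗ Σ𝓜`, with kernel the maps factoring through `Σ𝓜`.
-/
theorem AddMonoidHom.exists_addEquiv_comp_eq_of_ker_eq {A B D : Type*} [AddCommGroup A]
    [AddCommGroup B] [AddCommGroup D] (f : A →+ B) (g : A →+ D) (hf : Function.Surjective f)
    (hg : Function.Surjective g) (h : f.ker = g.ker) : ∃ e : B ≃+ D, ∀ a, e (f a) = g a := by
  refine ⟨(QuotientAddGroup.quotientKerEquivOfSurjective f hf).symm.trans
    ((QuotientAddGroup.quotientAddEquivOfEq h).trans
      (QuotientAddGroup.quotientKerEquivOfSurjective g hg)), fun a => ?_⟩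
  have hf_mk : (QuotientAddGroup.quotientKerEquivOfSurjective f hf).symm (f a) = a :=
    (AddEquiv.symm_apply_eq _).mpr rfl
  rw [AddEquiv.trans_apply, hf_mk]
  rfl

theorem CategoryTheory.NatTrans.nonempty_iso_of_surjective_of_ker_eq {J : Type*}
    [Category J] {P F G : J ⥤ AddCommGrpCat} (π : P ⟶ F) (ρ : P ⟶ G)
    (hπ : ∀ j, Function.Surjective (π.app j)) (hρ : ∀ j, Function.Surjective (ρ.app j))
    (hker : ∀ j x, π.app j x = 0 ↔ ρ.app j x = 0) : Nonempty (F ≅ G) := by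
  choose e he using fun j => (π.app j).hom.exists_addEquiv_comp_eq_of_ker_eq (ρ.app j).hom
    (hπ j) (hρ j) (AddSubgroup.ext (hker j))
  refine ⟨NatIso.ofComponents (fun j => (e j).toAddCommGrpIso) fun {j j'} φ => ?_⟩
  ext y
  obtain ⟨x, rfl⟩ := hπ j y
  simpa [he] using he j' (P.map φ x)

section Presentation

variable {M : Type u'} [Category.{v'} M] [Preadditive M]

def IsPresentation {A B : M} (h : A ⟶ B) {F : Mᵒᵖ ⥤ AddCommGrpCat.{v'}}
    (π : preadditiveYoneda.obj B ⟶ F) : Prop :=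
  (∀ m : M, Function.Surjective (π.app (op m))) ∧
    (∀ (m : M) (x : (preadditiveYoneda.obj B).obj (op m)),
      π.app (op m) x = 0 ↔ ∃ y, (preadditiveYoneda.map h).app (op m) y = x)

theorem IsPresentation.nonempty_iso {A B : M} {h : A ⟶ B} {F G : Mᵒᵖ ⥤ AddCommGrpCat.{v'}}
    {π : preadditiveYoneda.obj B ⟶ F} {ρ : preadditiveYoneda.obj B ⟶ G}
    (hπ : IsPresentation h π) (hρ : IsPresentation h ρ) : Nonempty (F ≅ G) :=
  NatTrans.nonempty_iso_of_surjective_of_ker_eq π ρ (fun m => hπ.1 m.unop)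
    (fun m => hρ.1 m.unop) fun m x => (hπ.2 m.unop x).trans (hρ.2 m.unop x).symm

end Presentation

section Restriction

omit [HasZeroObject C] [HasShift C ℤ] [∀ n : ℤ, (shiftFunctor C n).Additive] [Pretriangulated C]

variable {𝓜}

def resYonedaPostcomp {B : Subcat 𝓜} {X : C} (g : B.obj ⟶ X) :
    preadditiveYoneda.obj B ⟶ (resYoneda 𝓜).obj X where
  app m := AddCommGrpCat.ofHom
    { toFun := fun y => (y : m.unop ⟶ B).hom ≫ g
      map_zero' := zero_comp
      map_add' := fun _ _ => Preadditive.add_comp _ _ _ _ _ _ }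
  naturality m _ φ := AddCommGrpCat.ext fun y =>
    Category.assoc φ.unop.hom (y : m.unop ⟶ B).hom g

theorem resYoneda_map_eq_iff {X Y : C} (u u' : X ⟶ Y) :
    (resYoneda 𝓜).map u = (resYoneda 𝓜).map u' ↔
      ∀ (m : Subcat 𝓜) (x : m.obj ⟶ X), x ≫ u = x ≫ u' := by
  refine ⟨fun h m x => ConcreteCategory.congr_hom (NatTrans.congr_app h (op m)) x, fun h => ?_⟩
  ext m x
  exact h m.unop x

theorem resYoneda_natTrans_app_comp {X Y : C}
    (η : (resYoneda 𝓜).obj X ⟶ (resYoneda 𝓜).obj Y) {m m' : Subcat 𝓜} (φ : m.obj ⟶ m'.obj)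
    (x : m'.obj ⟶ X) : η.app (op m) (φ ≫ x) = φ ≫ η.app (op m') x :=
  NatTrans.naturality_apply η (ObjectProperty.homMk φ).op x

end Restriction

def IsRigid (𝓜 : Set C) : Prop :=
  ∀ ⦃m m' : C⦄, m ∈ 𝓜 → m' ∈ 𝓜 → ∀ φ : m ⟶ m'⟦(1 : ℤ)⟧, φ = 0

section Rigid

variable {𝓜}

theorem exists_comp_eq_of_distTriang (rigid : IsRigid 𝓜) {A B : Subcat 𝓜} {X : C} {f : A ⟶ B}
    {g : B.obj ⟶ X} {h : X ⟶ A.obj⟦(1 : ℤ)⟧} (hT : Triangle.mk f.hom g h ∈ distTriang C)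
    (m : Subcat 𝓜) (x : m.obj ⟶ X) : ∃ y : m.obj ⟶ B.obj, y ≫ g = x := by
  obtain ⟨y, hy⟩ := Triangle.coyoneda_exact₃ _ hT x (rigid m.property A.property _)
  exact ⟨y, hy.symm⟩

theorem isPresentation_resYonedaPostcomp (rigid : IsRigid 𝓜) {A B : Subcat 𝓜} {X : C}
    {f : A ⟶ B} {g : B.obj ⟶ X} {h : X ⟶ A.obj⟦(1 : ℤ)⟧}
    (hT : Triangle.mk f.hom g h ∈ distTriang C) :
    IsPresentation f (resYonedaPostcomp (𝓜 := 𝓜) g) := by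
  refine ⟨fun m x => ?_, fun m y => ⟨fun hy => ?_, ?_⟩⟩
  · obtain ⟨y, hy⟩ := exists_comp_eq_of_distTriang rigid hT m x
    exact ⟨ObjectProperty.homMk y, hy⟩
  · obtain ⟨z, hz⟩ := Triangle.coyoneda_exact₂ _ hT y.hom hy
    exact ⟨ObjectProperty.homMk z, ObjectProperty.hom_ext _ hz.symm⟩
  · rintro ⟨z, rfl⟩
    have hfg : f.hom ≫ g = 0 := comp_distTriang_mor_zero₁₂ _ hT
    show ((z : m ⟶ A).hom ≫ f.hom) ≫ g = 0
    rw [Category.assoc, hfg, comp_zero]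

theorem resYoneda_obj_additive_finPres (rigid : IsRigid 𝓜) {X : C} (hX : X ∈ star 𝓜) :
    ((resYoneda 𝓜).obj X).Additive ∧ FinPres ((resYoneda 𝓜).obj X) := by
  obtain ⟨M0, M1, hM0, hM1, f, g, h, hT⟩ := hX
  exact ⟨inferInstanceAs ((ObjectProperty.ι _).op ⋙ preadditiveYoneda.obj X).Additive,
    ⟨M0, hM0⟩, ⟨M1, hM1⟩, ObjectProperty.homMk f, resYonedaPostcomp g,
    isPresentation_resYonedaPostcomp rigid hT⟩

def starToModCat (rigid : IsRigid 𝓜) : Subcat (star 𝓜) ⥤ ModCat (Subcat 𝓜) :=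
  ObjectProperty.lift _ (ObjectProperty.ι _ ⋙ resYoneda 𝓜)
    fun X => resYoneda_obj_additive_finPres rigid X.property

theorem factorsThru_shift_iff (rigid : IsRigid 𝓜) {X Y : C} (hX : X ∈ star 𝓜) (u : X ⟶ Y) :
    FactorsThru ((shiftFunctor C (1 : ℤ)).obj '' 𝓜) u ↔
      ∀ (m : Subcat 𝓜) (x : m.obj ⟶ X), x ≫ u = 0 := by
  constructor
  · rintro ⟨_, ⟨m', hm', rfl⟩, a, b, rfl⟩ m x
    rw [← Category.assoc, rigid m.property hm' (x ≫ a), zero_comp]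
  · intro hu
    obtain ⟨M0, M1, hM0, hM1, f, g, h, hT⟩ := hX
    obtain ⟨k, hk⟩ := Triangle.yoneda_exact₃ _ hT u (hu ⟨M1, hM1⟩ g)
    exact ⟨M0⟦(1 : ℤ)⟧, ⟨M0, hM0, rfl⟩, h, k, hk.symm⟩

theorem starRel_eq_homRel (rigid : IsRigid 𝓜) : starRel 𝓜 = (starToModCat rigid).homRel := by
  funext X Y u u'
  refine propext ((factorsThru_shift_iff rigid X.property _).trans ?_)
  rw [Functor.homRel_iff, ObjectProperty.hom_ext_iff]
  show (∀ (m : Subcat 𝓜) (x : m.obj ⟶ X.obj), x ≫ (u.hom - u'.hom) = 0) ↔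
    (resYoneda 𝓜).map u.hom = (resYoneda 𝓜).map u'.hom
  simp only [resYoneda_map_eq_iff, Preadditive.comp_sub, sub_eq_zero]

theorem resYoneda_map_surjective (rigid : IsRigid 𝓜) {X Y : C} (hX : X ∈ star 𝓜)
    (η : (resYoneda 𝓜).obj X ⟶ (resYoneda 𝓜).obj Y) : ∃ ψ : X ⟶ Y, (resYoneda 𝓜).map ψ = η := by
  obtain ⟨M0, M1, hM0, hM1, f, g, h, hT⟩ := hX
  let A : Subcat 𝓜 := ⟨M0, hM0⟩
  let B : Subcat 𝓜 := ⟨M1, hM1⟩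
  have hf : f ≫ η.app (op B) g = 0 :=
    (resYoneda_natTrans_app_comp η (m := A) (m' := B) f g).symm.trans
      ((congrArg (η.app (op A)) (comp_distTriang_mor_zero₁₂ _ hT)).trans (map_zero _))
  obtain ⟨ψ, hψ⟩ := Triangle.yoneda_exact₂ _ hT _ hf
  refine ⟨ψ, ?_⟩
  ext m x
  obtain ⟨y, rfl⟩ :=
    exists_comp_eq_of_distTriang rigid (f := ObjectProperty.homMk (X := A) (Y := B) f) hT m.unop x
  exact ((Category.assoc _ _ _).trans (congrArg (y ≫ ·) hψ.symm)).trans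
    (resYoneda_natTrans_app_comp η y g).symm

instance (rigid : IsRigid 𝓜) : (starToModCat rigid).Full where
  map_surjective {X Y} η := by
    obtain ⟨ψ, hψ⟩ := resYoneda_map_surjective rigid X.property η.hom
    exact ⟨ObjectProperty.homMk ψ, ObjectProperty.hom_ext _ hψ⟩

instance (rigid : IsRigid 𝓜) : (starToModCat rigid).EssSurj where
  mem_essImage F := by
    obtain ⟨-, A, B, h, π, hπ⟩ := F.property
    obtain ⟨X, g, k, hT⟩ := distinguished_cocone_triangle h.hom
    obtain ⟨e⟩ := (isPresentation_resYonedaPostcomp rigid hT).nonempty_iso hπ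
    exact ⟨⟨X, A.obj, B.obj, A.property, B.property, h.hom, g, k, hT⟩,
      ⟨ObjectProperty.isoMk _ e⟩⟩

end Rigid

theorem stmt8
    (rigid : ∀ ⦃m m' : C⦄, m ∈ 𝓜 → m' ∈ 𝓜 → ∀ φ : m ⟶ m'⟦(1 : ℤ)⟧, φ = 0) :
    ∃ E : CategoryTheory.Quotient (starRel 𝓜) ⥤ ModCat (Subcat 𝓜),
      E.IsEquivalence ∧
      Nonempty (Quotient.functor (starRel 𝓜) ⋙ E ⋙ ObjectProperty.ι _ ≅
        ObjectProperty.ι _ ⋙ resYoneda 𝓜) := by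
  change IsRigid 𝓜 at rigid
  rw [starRel_eq_homRel rigid]
  exact ⟨CategoryTheory.Quotient.lift _ (starToModCat rigid) fun _ _ _ _ => id, inferInstance,
    ⟨Iso.refl _⟩⟩
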